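/- Let p be a prime and let G be a finitely generated p-group. Suppose there exist integers k ≥ 1 and ℓ ≥ 1 and a normal subgroup N of G such that N ≤ Φ_p(G), the index (G : N) equals p^ℓ, and N is isomorphic as a group to the direct product of k copies of G. Let d denote the maximum of d(H) over all subgroups H of the finite group G/N, and set C = (k−1)·d(G) + d. Then for every m ∈ ℕ, every subgroup U ≤ G of index p^m satisfies d(U) ≤ C·m + d(G). -/

import Mathlib

open Filter Topology
open scoped commutatorElement

/-- `ngen G` is the minimal number of generators `d(G)` of a group `G`. -/
noncomputable def ngen (G : Type*) [Group G] : ℕ :=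
  sInf {n | ∃ S : Finset G, S.card = n ∧ Subgroup.closure (S : Set G) = ⊤}

/-- `phiP p G` is `Φ_p(G)`, the subgroup of `G` generated by all commutators
and all `p`-th powers. -/
def phiP (p : ℕ) (G : Type*) [Group G] : Subgroup G :=
  Subgroup.normalClosure ({x | ∃ a b : G, x = ⁅a, b⁆} ∪ {x | ∃ g : G, x = g ^ p})

instance phiP_normal (p : ℕ) (G : Type*) [Group G] : (phiP p G).Normal :=
  Subgroup.normalClosure_normal

/-- `dp p G = d_p(G)`, the minimal number of generators of `G/Φ_p(G)`. -/
noncomputable def dp (p : ℕ) (G : Type*) [Group G] : ℕ := ngen (G ⧸ phiP p G)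

/-- `subCount G n = s_n(G)`, the number of (finite-index) subgroups of `G`
of index at most `n`. -/
noncomputable def subCount (G : Type*) [Group G] (n : ℕ) : ℕ :=
  Nat.card {H : Subgroup G // 0 < H.index ∧ H.index ≤ n}

/-- `dpMax p G m = d_p(m)`, the maximum of `d_p(U)` over subgroups `U ≤ G`
of index exactly `p^m`. -/
noncomputable def dpMax (p : ℕ) (G : Type*) [Group G] (m : ℕ) : ℕ :=
  sSup {d | ∃ U : Subgroup G, U.index = p ^ m ∧ d = dp p ↥U}

/-!
Induction on `m`. The image of a proper subgroup `U` of finite index in the finite `p`-group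
`G / core U` lies in a maximal subgroup `M`; such an `M` is normal of index `p`, hence contains
the image of `Φ_p`, and therefore `U ⊔ N ≠ G`. So `[N : U ⊓ N] = p ^ i` with `i < m`, and
`d(U) ≤ d(U ⊓ N) + d(UN / N) ≤ d(U ⊓ N) + d`. Now `U ⊓ N` is a subgroup of index `p ^ i` of
`N ≃ G ^ k`; a subgroup `W ≤ A × B` is an extension of its image in `B` by its intersection with
`A`, with multiplicative indices, so peeling off one factor at a time and using the induction
hypothesis bounds `d(U ⊓ N)` by `C i + k d(G)`. Finally
`C i + k d(G) + d ≤ C (i + 1) + d(G) ≤ C m + d(G)` because `C ≥ (k - 1) d(G) + d`.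
-/
section Generators

variable {X Y Z : Type*} [Group X] [Group Y] [Group Z]

lemma ngen_le_card_of_closure_eq_top {S : Finset X} (h : Subgroup.closure (S : Set X) = ⊤) :
    ngen X ≤ S.card :=
  Nat.sInf_le ⟨S, rfl, h⟩

lemma exists_finset_card_eq_ngen_closure_eq_top (X : Type*) [Group X] [Group.FG X] :
    ∃ S : Finset X, S.card = ngen X ∧ Subgroup.closure (S : Set X) = ⊤ :=
  Nat.sInf_mem (Group.fg_iff'.mp ‹_›)

lemma ngen_eq_zero_of_subsingleton [Subsingleton X] : ngen X = 0 :=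
  Nat.le_zero.mp <| ngen_le_card_of_closure_eq_top (S := ∅) (Subsingleton.elim _ _)

lemma exists_finset_card_eq_closure_eq_top_of_mulEquiv (e : X ≃* Y) {S : Finset X}
    (hS : Subgroup.closure (S : Set X) = ⊤) :
    ∃ T : Finset Y, T.card = S.card ∧ Subgroup.closure (T : Set Y) = ⊤ := by
  classical
  refine ⟨S.image e, Finset.card_image_of_injective _ e.injective, ?_⟩
  rw [Finset.coe_image, ← MonoidHom.coe_coe, ← MonoidHom.map_closure, hS,
    Subgroup.map_top_of_surjective _ e.surjective]

lemma ngen_congr (e : X ≃* Y) : ngen X = ngen Y := by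
  unfold ngen
  congr 1
  ext n
  constructor
  · rintro ⟨S, rfl, hS⟩
    exact exists_finset_card_eq_closure_eq_top_of_mulEquiv e hS
  · rintro ⟨S, rfl, hS⟩
    exact exists_finset_card_eq_closure_eq_top_of_mulEquiv e.symm hS

lemma ngen_le_add_of_range_eq_ker [Group.FG Y] [Group.FG Z] (f : X →* Y)
    (hf : Function.Surjective f) (g : Z →* X) (hfg : g.range = f.ker) :
    ngen X ≤ ngen Z + ngen Y := by
  classical
  obtain ⟨S, hS, hSgen⟩ := exists_finset_card_eq_ngen_closure_eq_top Z
  obtain ⟨T, hT, hTgen⟩ := exists_finset_card_eq_ngen_closure_eq_top Y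
  set H := Subgroup.closure ((S.image g ∪ T.image (Function.surjInv hf) : Finset X) : Set X)
  have hker : f.ker ≤ H := by
    rw [← hfg, MonoidHom.range_eq_map, ← hSgen, MonoidHom.map_closure, Subgroup.closure_le]
    rintro _ ⟨z, hz, rfl⟩
    exact Subgroup.subset_closure (Finset.mem_union_left _ (Finset.mem_image_of_mem g hz))
  have hmap : H.map f = ⊤ := by
    rw [eq_top_iff, ← hTgen, Subgroup.closure_le]
    intro t ht
    exact ⟨_, Subgroup.subset_closure (Finset.mem_union_right _ (Finset.mem_image_of_mem _ ht)),
      Function.surjInv_eq hf t⟩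
  have hH : H = ⊤ := by
    rw [← sup_eq_left.mpr hker, ← Subgroup.comap_map_eq, hmap, Subgroup.comap_top]
  calc ngen X ≤ (S.image g ∪ T.image (Function.surjInv hf)).card :=
        ngen_le_card_of_closure_eq_top hH
    _ ≤ S.card + T.card :=
        (Finset.card_union_le _ _).trans (add_le_add Finset.card_image_le Finset.card_image_le)
    _ = ngen Z + ngen Y := by rw [hS, hT]

lemma ngen_le_sSup_ngen_subgroup [Finite X] (H : Subgroup X) :
    ngen H ≤ sSup {n | ∃ H : Subgroup X, n = ngen H} := by
  have hfin : {n | ∃ H : Subgroup X, n = ngen H}.Finite := by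
    refine (Set.finite_range fun H : Subgroup X => ngen H).subset ?_
    rintro _ ⟨H, rfl⟩
    exact ⟨H, rfl⟩
  exact le_csSup hfin.bddAbove ⟨H, rfl⟩

lemma ngen_subgroup_le_add (f : X →* Y) (g : Z →* X) (hfg : g.range = f.ker) (H : Subgroup X)
    [Group.FG (H.comap g)] [Group.FG (H.map f)] :
    ngen H ≤ ngen (H.comap g) + ngen (H.map f) := by
  refine ngen_le_add_of_range_eq_ker (f.subgroupMap H) (f.subgroupMap_surjective H)
    (g.subgroupComap H) ?_
  ext ⟨x, hx⟩
  simp only [MonoidHom.mem_range, MonoidHom.mem_ker, Subtype.ext_iff]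
  constructor
  · rintro ⟨z, rfl⟩
    exact f.mem_ker.mp (hfg ▸ ⟨z, rfl⟩)
  · intro h
    obtain ⟨z, rfl⟩ : x ∈ g.range := hfg ▸ f.mem_ker.mpr h
    exact ⟨⟨z, hx⟩, rfl⟩

end Generators

namespace Subgroup

variable {X : Type*} [Group X]

lemma relIndex_sup_of_normal (H K : Subgroup X) [K.Normal] :
    H.relIndex (H ⊔ K) = H.relIndex K := by
  have hsurj : Function.Surjective
      (quotientSubgroupOfEmbeddingOfLE H (le_sup_right : K ≤ H ⊔ K)) := by
    intro q
    induction q using QuotientGroup.induction_on with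
    | H x =>
      have hx : (x : X) ∈ ((K ⊔ H : Subgroup X) : Set X) := sup_comm H K ▸ x.2
      rw [normal_mul K H] at hx
      obtain ⟨k, hk, h, hh, hkh⟩ := hx
      refine ⟨QuotientGroup.mk ⟨k, hk⟩, ?_⟩
      rw [quotientSubgroupOfEmbeddingOfLE_apply_mk, QuotientGroup.eq, mem_subgroupOf]
      simpa [← hkh] using hh
  rw [relIndex, relIndex, index_eq_card, index_eq_card]
  exact (Nat.card_congr (Equiv.ofBijective _ ⟨Function.Embedding.injective _, hsurj⟩)).symm

lemma relIndex_mul_index_sup (H K : Subgroup X) [K.Normal] :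
    H.relIndex K * (H ⊔ K).index = H.index := by
  rw [← relIndex_sup_of_normal, relIndex_mul_index le_sup_left]

end Subgroup

lemma MonoidHom.range_inl_eq_ker_snd (A B : Type*) [Group A] [Group B] :
    (MonoidHom.inl A B).range = (MonoidHom.snd A B).ker := by
  ext ⟨a, b⟩
  simp [Prod.ext_iff, Subgroup.mem_prod, eq_comm]

lemma Subgroup.index_comap_mul_index_map {X Y Z : Type*} [Group X] [Group Y] [Group Z]
    (f : X →* Y) (hf : Function.Surjective f) (g : Z →* X) (hfg : g.range = f.ker)
    (H : Subgroup X) : (H.comap g).index * (H.map f).index = H.index := by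
  rw [index_comap, hfg, index_map, f.range_eq_top_of_surjective hf, index_top, mul_one,
    relIndex_mul_index_sup]

lemma Nat.exists_eq_pow_of_mul_eq_prime_pow {p a b n : ℕ} (hp : p.Prime) (h : a * b = p ^ n) :
    ∃ i j, i + j = n ∧ a = p ^ i ∧ b = p ^ j := by
  obtain ⟨i, -, rfl⟩ := (Nat.dvd_prime_pow hp).mp (Dvd.intro b h)
  obtain ⟨j, -, rfl⟩ := (Nat.dvd_prime_pow hp).mp (Dvd.intro_left _ h)
  exact ⟨i, j, Nat.pow_right_injective hp.two_le (by simp only [pow_add, h]), rfl, rfl⟩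

section Frattini

variable {X Y : Type*} [Group X] [Group Y] {p : ℕ}

lemma map_phiP_le_of_surjective (f : X →* Y) (hf : Function.Surjective f) :
    (phiP p X).map f ≤ phiP p Y := by
  rw [phiP, Subgroup.map_normalClosure _ _ hf]
  apply Subgroup.normalClosure_mono
  rintro _ ⟨x, ⟨a, b, rfl⟩ | ⟨g, rfl⟩, rfl⟩
  · exact Or.inl ⟨f a, f b, map_commutatorElement f a b⟩
  · exact Or.inr ⟨f g, map_pow f g p⟩

lemma isSimpleGroup_quotient_of_isCoatom {M : Subgroup X} [M.Normal] (hM : IsCoatom M) :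
    IsSimpleGroup (X ⧸ M) := by
  let e : Subgroup (X ⧸ M) ≃o Set.Ici M := QuotientGroup.comapMk'OrderIso M
  have : IsSimpleOrder (Subgroup (X ⧸ M)) :=
    e.isSimpleOrder_iff.mpr (Set.isSimpleOrder_Ici_iff_isCoatom.mpr hM)
  have : Nontrivial (X ⧸ M) := Subgroup.nontrivial_iff.mp inferInstance
  exact ⟨fun H _ => IsSimpleOrder.eq_bot_or_eq_top H⟩

lemma phiP_le_of_isCoatom (hp : p.Prime) [Finite X] (hX : IsPGroup p X) {M : Subgroup X}
    (hM : IsCoatom M) : phiP p X ≤ M := by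
  have : Fact p.Prime := ⟨hp⟩
  have : Group.IsNilpotent X := hX.isNilpotent
  have : M.Normal :=
    Subgroup.NormalizerCondition.normal_of_coatom M Group.normalizerCondition_of_isNilpotent hM
  have : IsSimpleGroup (X ⧸ M) := isSimpleGroup_quotient_of_isCoatom hM
  have : Group.IsNilpotent (X ⧸ M) := (hX.to_quotient M).isNilpotent
  have hcard : Nat.card (X ⧸ M) = p := by
    obtain ⟨n, hn⟩ := IsPGroup.iff_card.mp (hX.to_quotient M)
    have hprime := IsSimpleGroup.prime_card (α := X ⧸ M)
    rw [hn] at hprime ⊢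
    rw [((Nat.Prime.pow_eq_iff hprime).mp rfl).2, pow_one]
  refine Subgroup.normalClosure_le_normal ?_
  rintro _ (⟨a, b, rfl⟩ | ⟨g, rfl⟩) <;> rw [SetLike.mem_coe, ← QuotientGroup.eq_one_iff]
  · rw [← QuotientGroup.mk'_apply, map_commutatorElement, commutatorElement_eq_one_iff_mul_comm]
    exact mul_comm _ _
  · rw [QuotientGroup.mk_pow, ← hcard]
    exact pow_card_eq_one'

lemma sup_ne_top_of_le_phiP (hp : p.Prime) (hX : IsPGroup p X) {U N : Subgroup X}
    [U.FiniteIndex] (hU : U ≠ ⊤) (hN : N ≤ phiP p X) : U ⊔ N ≠ ⊤ := by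
  obtain ⟨K, hKU, _, _⟩ : ∃ K : Subgroup X, K ≤ U ∧ K.Normal ∧ K.FiniteIndex :=
    ⟨U.normalCore, U.normalCore_le, inferInstance, inferInstance⟩
  set π := QuotientGroup.mk' K
  have hπ : Function.Surjective π := QuotientGroup.mk'_surjective K
  have hUK : U.map π ≠ ⊤ := by
    intro h
    apply hU
    rw [← sup_eq_left.mpr hKU, ← QuotientGroup.ker_mk' K, ← Subgroup.comap_map_eq, h,
      Subgroup.comap_top]
  obtain ⟨M, hM, hUM⟩ := (eq_top_or_exists_le_coatom (U.map π)).resolve_left hUK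
  have hNM : N.map π ≤ M :=
    (Subgroup.map_mono hN).trans <| (map_phiP_le_of_surjective π hπ).trans <|
      phiP_le_of_isCoatom hp (hX.to_quotient K) hM
  intro hUN
  apply hM.1
  rw [eq_top_iff, ← Subgroup.map_top_of_surjective π hπ, ← hUN, Subgroup.map_sup]
  exact sup_le hUM hNM

end Frattini

def SubgroupNgenBound (X : Type*) [Group X] (p c b n : ℕ) : Prop :=
  ∀ i ≤ n, ∀ W : Subgroup X, W.index = p ^ i → ngen W ≤ c * i + b

lemma subgroupNgenBound_zero (X : Type*) [Group X] (p c : ℕ) :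
    SubgroupNgenBound X p c (ngen X) 0 := by
  intro i hi W hW
  obtain rfl : i = 0 := Nat.le_zero.mp hi
  obtain rfl : W = ⊤ := Subgroup.index_eq_one.mp hW
  rw [ngen_congr Subgroup.topEquiv]
  omega

namespace SubgroupNgenBound

variable {p c b n : ℕ}

lemma of_mulEquiv {X Y : Type*} [Group X] [Group Y] (e : X ≃* Y)
    (h : SubgroupNgenBound X p c b n) : SubgroupNgenBound Y p c b n := by
  intro i hi W hW
  rw [ngen_congr (e.symm.subgroupMap W)]
  exact h i hi _ (by rw [Subgroup.index_map_equiv, hW])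

lemma prod {A B : Type*} [Group A] [Group B] [Group.FG A] [Group.FG B] (hp : p.Prime) {a : ℕ}
    (hA : SubgroupNgenBound A p c a n) (hB : SubgroupNgenBound B p c b n) :
    SubgroupNgenBound (A × B) p c (a + b) n := by
  intro i hi W hW
  have hexact := MonoidHom.range_inl_eq_ker_snd A B
  obtain ⟨i₁, i₂, rfl, h₁, h₂⟩ := Nat.exists_eq_pow_of_mul_eq_prime_pow hp <|
    (W.index_comap_mul_index_map _ Prod.snd_surjective _ hexact).trans hW
  have : (W.comap (MonoidHom.inl A B)).FiniteIndex := ⟨h₁ ▸ pow_ne_zero _ hp.ne_zero⟩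
  have : (W.map (MonoidHom.snd A B)).FiniteIndex := ⟨h₂ ▸ pow_ne_zero _ hp.ne_zero⟩
  calc ngen W ≤ ngen (W.comap (MonoidHom.inl A B)) + ngen (W.map (MonoidHom.snd A B)) :=
        ngen_subgroup_le_add _ _ hexact W
    _ ≤ (c * i₁ + a) + (c * i₂ + b) := add_le_add (hA i₁ (by omega) _ h₁) (hB i₂ (by omega) _ h₂)
    _ = c * (i₁ + i₂) + (a + b) := by ring

end SubgroupNgenBound

def piFinSuccMulEquiv (G : Type*) [Group G] (k : ℕ) : (Fin (k + 1) → G) ≃* G × (Fin k → G) :=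
  { (Fin.consEquiv fun _ => G).symm with map_mul' := fun _ _ => rfl }

lemma SubgroupNgenBound.pi {p c b n : ℕ} {G : Type*} [Group G] [Group.FG G] (hp : p.Prime)
    (h : SubgroupNgenBound G p c b n) : ∀ k : ℕ, SubgroupNgenBound (Fin k → G) p c (k * b) n
  | 0 => fun _ _ _ _ => by simp [ngen_eq_zero_of_subsingleton]
  | k + 1 => by
    rw [add_one_mul, add_comm (k * b)]
    exact (h.prod hp (h.pi hp k)).of_mulEquiv (piFinSuccMulEquiv G k).symm

lemma SubgroupNgenBound.succ_of_le_phiP {p : ℕ} (hp : p.Prime) {G : Type*} [Group G]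
    [Group.FG G] (hG : IsPGroup p G) {N : Subgroup G} [N.Normal] [N.FiniteIndex]
    (hN : N ≤ phiP p G) {k : ℕ} (e : N ≃* (Fin k → G)) {C d n : ℕ}
    (hd : ∀ H : Subgroup (G ⧸ N), ngen H ≤ d) (hC : k * ngen G + d ≤ C + ngen G)
    (h : SubgroupNgenBound G p C (ngen G) n) : SubgroupNgenBound G p C (ngen G) (n + 1) := by
  intro m hm U hU
  rcases hm.lt_or_eq with hm | rfl
  · exact h m (by omega) U hU
  have : U.FiniteIndex := ⟨hU ▸ pow_ne_zero _ hp.ne_zero⟩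
  have hUtop : U ≠ ⊤ := by
    rintro rfl
    exact (Nat.one_lt_pow n.succ_ne_zero hp.one_lt).ne (Subgroup.index_top.symm.trans hU)
  obtain ⟨i, j, hij, hi, hj⟩ :=
    Nat.exists_eq_pow_of_mul_eq_prime_pow hp ((U.relIndex_mul_index_sup N).trans hU)
  have hj0 : j ≠ 0 := by
    rintro rfl
    exact sup_ne_top_of_le_phiP hp hG hUtop hN (Subgroup.index_eq_one.mp hj)
  replace hi : (U.comap N.subtype).index = p ^ i := hi
  have : (U.comap N.subtype).FiniteIndex := ⟨hi ▸ pow_ne_zero _ hp.ne_zero⟩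
  have hUN : ngen (U.comap N.subtype) ≤ C * i + k * ngen G :=
    (h.pi hp k).of_mulEquiv e.symm i (by omega) _ hi
  calc ngen U ≤ ngen (U.comap N.subtype) + ngen (U.map (QuotientGroup.mk' N)) :=
        ngen_subgroup_le_add _ N.subtype (by rw [N.range_subtype, QuotientGroup.ker_mk']) U
    _ ≤ C * i + k * ngen G + d := add_le_add hUN (hd _)
    _ ≤ C * (n + 1) + ngen G := by nlinarith [Nat.mul_le_mul_left C (show i ≤ n by omega)]

theorem generators_bound_for_self_replicating_general
    (p : ℕ) (hp : p.Prime) (G : Type*) [Group G] [Group.FG G]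
    (hpg : IsPGroup p G)
    (k ℓ : ℕ) (hk : 1 ≤ k)
    (N : Subgroup G) [hN : N.Normal] (hNphi : N ≤ phiP p G)
    (hNidx : N.index = p ^ ℓ)
    (hNiso : Nonempty (N ≃* (Fin k → G)))
    (d : ℕ) (hd : d = sSup {n | ∃ H : Subgroup (G ⧸ N), n = ngen ↥H})
    (C : ℕ) (hC : C = (k - 1) * ngen G + d) :
    ∀ m : ℕ, ∀ U : Subgroup G, U.index = p ^ m →
      ngen ↥U ≤ C * m + ngen G := by
  obtain ⟨e⟩ := hNiso
  have : N.FiniteIndex := ⟨hNidx ▸ pow_ne_zero _ hp.ne_zero⟩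
  have hdN : ∀ H : Subgroup (G ⧸ N), ngen H ≤ d := hd ▸ ngen_le_sSup_ngen_subgroup
  have hCk : k * ngen G + d ≤ C + ngen G := by
    obtain ⟨k, rfl⟩ := Nat.exists_eq_add_of_le' hk
    simp only [hC, add_tsub_cancel_right, add_one_mul]
    omega
  have hbound : ∀ n, SubgroupNgenBound G p C (ngen G) n := fun n => by
    induction n with
    | zero => exact subgroupNgenBound_zero G p C
    | succ n ih => exact ih.succ_of_le_phiP hp hpg hNphi e hdN hCk
  exact fun m U hU => hbound m m le_rfl U hU

theorem generators_bound_for_self_replicating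
    (p : ℕ) (hp : p.Prime) (G : Type*) [Group G] [Group.FG G]
    (hpg : IsPGroup p G)
    (k ℓ : ℕ) (hk : 1 ≤ k) (hl : 1 ≤ ℓ)
    (N : Subgroup G) [hN : N.Normal] (hNphi : N ≤ phiP p G)
    (hNidx : N.index = p ^ ℓ)
    (hNiso : Nonempty (N ≃* (Fin k → G)))
    (d : ℕ) (hd : d = sSup {n | ∃ H : Subgroup (G ⧸ N), n = ngen ↥H})
    (C : ℕ) (hC : C = (k - 1) * ngen G + d) :
    ∀ m : ℕ, ∀ U : Subgroup G, U.index = p ^ m →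
      ngen ↥U ≤ C * m + ngen G :=
  generators_bound_for_self_replicating_general p hp G hpg k ℓ hk N (hN := hN) hNphi hNidx hNiso d
    hd C hC
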